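/- Let (X̃, d̃, ≪̃, ≤̃, τ̃) be a regular Lorentzian length space extending a strongly causal Lorentzian length space (X, d, ≪, ≤, τ) via ι, let λ : [0,t*) → X be the pullback under ι of a timelike curve that is maximal in some localising neighbourhood Ũ of X̃ and whose image under ι lies in Ũ ∩ ι(X). Then λ is a timelike geodesic of X of finite τ-length L_τ(λ) < ∞ which is inextendible as a geodesic in X. -/

import Mathlib

open scoped ENNReal NNReal Topology
open Set

universe u v

/-- A *Lorentzian pre-length space* `(X, d, ≪, ≤, τ)`: a metric space `(X,d)` together with a
preorder `≤` (`causal`), a transitive relation `≪` (`chron`) contained in `≤`, and a lower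
semicontinuous time separation function `τ : X × X → [0,∞]` satisfying the reverse triangle
inequality, `τ(x,y) = 0` if `x ≰ y`, and `τ(x,y) > 0 ↔ x ≪ y`. -/
structure LorentzianPreLength (X : Type u) [MetricSpace X] : Type u where
  chron : X → X → Prop
  causal : X → X → Prop
  causal_refl : ∀ x, causal x x
  causal_trans : ∀ {x y z}, causal x y → causal y z → causal x z
  chron_trans : ∀ {x y z}, chron x y → chron y z → chron x z
  chron_le_causal : ∀ {x y}, chron x y → causal x y
  tau : X → X → ℝ≥0∞
  tau_lsc : LowerSemicontinuous fun p : X × X => tau p.1 p.2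
  tau_rev_triangle : ∀ {x y z}, causal x y → causal y z → tau x y + tau y z ≤ tau x z
  tau_eq_zero : ∀ {x y}, ¬ causal x y → tau x y = 0
  tau_pos_iff_chron : ∀ {x y}, 0 < tau x y ↔ chron x y

namespace LorentzianPreLength

variable {X : Type u} [MetricSpace X] (L : LorentzianPreLength X)

/-- The chronological future `I⁺(x) = {y | x ≪ y}`. -/
def chronFuture (x : X) : Set X := {y | L.chron x y}

/-- The chronological past `I⁻(x) = {y | y ≪ x}`. -/
def chronPast (x : X) : Set X := {y | L.chron y x}

/-- A future-directed causal curve on the (interval) `I`: locally Lipschitz, non-constant, and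
any two of its points are causally related in the direction of the parametrisation. -/
def IsCausalOn (γ : ℝ → X) (I : Set ℝ) : Prop :=
  (∀ c d : ℝ, c ≤ d → Icc c d ⊆ I → ∃ K : ℝ≥0, LipschitzOnWith K γ (Icc c d)) ∧
  (∀ ⦃s t : ℝ⦄, s ∈ I → t ∈ I → s < t → L.causal (γ s) (γ t)) ∧
  (∃ s ∈ I, ∃ t ∈ I, γ s ≠ γ t)

/-- A future-directed timelike curve. -/
def IsTimelikeOn (γ : ℝ → X) (I : Set ℝ) : Prop :=
  L.IsCausalOn γ I ∧ ∀ ⦃s t : ℝ⦄, s ∈ I → t ∈ I → s < t → L.chron (γ s) (γ t)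

/-- A past-directed causal curve. -/
def IsPdCausalOn (γ : ℝ → X) (I : Set ℝ) : Prop :=
  (∀ c d : ℝ, c ≤ d → Icc c d ⊆ I → ∃ K : ℝ≥0, LipschitzOnWith K γ (Icc c d)) ∧
  (∀ ⦃s t : ℝ⦄, s ∈ I → t ∈ I → s < t → L.causal (γ t) (γ s)) ∧
  (∃ s ∈ I, ∃ t ∈ I, γ s ≠ γ t)

/-- A past-directed timelike curve. -/
def IsPdTimelikeOn (γ : ℝ → X) (I : Set ℝ) : Prop :=
  L.IsPdCausalOn γ I ∧ ∀ ⦃s t : ℝ⦄, s ∈ I → t ∈ I → s < t → L.chron (γ t) (γ s)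

/-- `t : ℕ → ℝ` is a partition `c = t₀ < t₁ < ⋯ < t_N = d`. -/
def IsPartition (c d : ℝ) (N : ℕ) (t : ℕ → ℝ) : Prop :=
  t 0 = c ∧ t N = d ∧ ∀ i < N, t i < t (i + 1)

/-- The `τ`-length of a curve on `[c,d]`:
`L_τ(γ) = inf { Σ τ(γ(tᵢ), γ(tᵢ₊₁)) : c = t₀ < ⋯ < t_N = d }`. -/
noncomputable def tauLen (γ : ℝ → X) (c d : ℝ) : ℝ≥0∞ :=
  ⨅ (N : ℕ) (t : ℕ → ℝ) (_ : IsPartition c d N t),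
    ∑ i ∈ Finset.range N, L.tau (γ (t i)) (γ (t (i + 1)))

/-- The `τ`-length of a curve on an arbitrary interval `I`, as the supremum of the lengths of its
restrictions to compact subintervals. -/
noncomputable def tauLenOn (γ : ℝ → X) (I : Set ℝ) : ℝ≥0∞ :=
  ⨆ (c : ℝ) (d : ℝ) (_ : c ≤ d) (_ : Icc c d ⊆ I), L.tauLen γ c d

/-- `γ : [c,d] → Ω` is maximal in `Ω`: no future-directed causal curve in `Ω` with the same
endpoints is longer. -/
def IsMaximalIn (γ : ℝ → X) (c d : ℝ) (Ω : Set X) : Prop :=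
  ∀ (σ : ℝ → X) (c' d' : ℝ), L.IsCausalOn σ (Icc c' d') → σ c' = γ c → σ d' = γ d →
    MapsTo σ (Icc c' d') Ω → L.tauLen σ c' d' ≤ L.tauLen γ c d

/-- A localising neighbourhood `Ω` of `x`, with local time separation function `ω`. -/
structure LocalisingNbhd (L : LorentzianPreLength X) (x : X) : Type u where
  Ω : Set X
  isOpen : IsOpen Ω
  mem : x ∈ Ω
  lengthBound : ∃ C : ℝ≥0∞, C < ∞ ∧ ∀ (γ : ℝ → X) (c d : ℝ), L.IsCausalOn γ (Icc c d) →
      MapsTo γ (Icc c d) Ω → eVariationOn γ (Icc c d) ≤ C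
  omega : X → X → ℝ≥0∞
  omega_lt_top : ∀ p ∈ Ω, ∀ q ∈ Ω, omega p q < ∞
  omega_cont : ContinuousOn (fun p : X × X => omega p.1 p.2) (Ω ×ˢ Ω)
  omega_rev_triangle : ∀ {p q r}, p ∈ Ω → q ∈ Ω → r ∈ Ω →
      L.causal p q → L.causal q r → omega p q + omega q r ≤ omega p r
  omega_eq_zero : ∀ {p q}, p ∈ Ω → q ∈ Ω → ¬ L.causal p q → omega p q = 0
  omega_pos_iff : ∀ {p q}, p ∈ Ω → q ∈ Ω → (0 < omega p q ↔ L.chron p q)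
  future_nonempty : ∀ y ∈ Ω, (L.chronFuture y ∩ Ω).Nonempty
  past_nonempty : ∀ y ∈ Ω, (L.chronPast y ∩ Ω).Nonempty
  max_curve : ∀ p ∈ Ω, ∀ q ∈ Ω, L.causal p q → p ≠ q →
    ∃ γ : ℝ → X, L.IsCausalOn γ (Icc 0 1) ∧ γ 0 = p ∧ γ 1 = q ∧
      MapsTo γ (Icc 0 1) Ω ∧ L.IsMaximalIn γ 0 1 Ω ∧
      L.tauLen γ 0 1 = omega p q ∧ omega p q ≤ L.tau p q

/-- The curve `γ` contains a null segment on `[c,d]`. -/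
def HasNullSegment (γ : ℝ → X) (c d : ℝ) : Prop :=
  ∃ s t : ℝ, c ≤ s ∧ s < t ∧ t ≤ d ∧
    ∀ ⦃u v : ℝ⦄, s ≤ u → u < v → v ≤ t → ¬ L.chron (γ u) (γ v)

/-- A localising neighbourhood is *regular* if maximal curves between timelike related points can
be chosen timelike and strictly longer than any causal curve containing a null segment. -/
def LocalisingNbhd.IsRegular {x : X} (Nb : L.LocalisingNbhd x) : Prop :=
  ∀ p ∈ Nb.Ω, ∀ q ∈ Nb.Ω, L.chron p q →
    ∃ γ : ℝ → X, L.IsTimelikeOn γ (Icc 0 1) ∧ γ 0 = p ∧ γ 1 = q ∧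
      MapsTo γ (Icc 0 1) Nb.Ω ∧ L.IsMaximalIn γ 0 1 Nb.Ω ∧
      L.tauLen γ 0 1 = Nb.omega p q ∧ Nb.omega p q ≤ L.tau p q ∧
      ∀ (σ : ℝ → X) (c d : ℝ), L.IsCausalOn σ (Icc c d) → σ c = p → σ d = q →
        MapsTo σ (Icc c d) Nb.Ω → L.HasNullSegment σ c d →
        L.tauLen σ c d < L.tauLen γ 0 1

/-- `X` is localisable: every point has a localising neighbourhood. -/
def Localisable : Prop := ∀ x : X, Nonempty (L.LocalisingNbhd x)

/-- `X` is regularly localisable. -/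
def RegularlyLocalisable : Prop := ∀ x : X, ∃ Nb : L.LocalisingNbhd x, Nb.IsRegular

/-- `X` is locally causally closed: every point has a neighbourhood `U` such that `≤` is closed
in `closure U × closure U`. -/
def LocallyCausallyClosed : Prop :=
  ∀ x : X, ∃ U ∈ 𝓝 x,
    IsClosed {p : X × X | p.1 ∈ closure U ∧ p.2 ∈ closure U ∧ L.causal p.1 p.2}

/-- `X` is causally path connected. -/
def CausallyPathConnected : Prop :=
  (∀ ⦃x y⦄, L.chron x y →
      ∃ γ : ℝ → X, L.IsTimelikeOn γ (Icc 0 1) ∧ γ 0 = x ∧ γ 1 = y) ∧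
  (∀ ⦃x y⦄, L.causal x y → x ≠ y →
      ∃ γ : ℝ → X, L.IsCausalOn γ (Icc 0 1) ∧ γ 0 = x ∧ γ 1 = y)

/-- `𝒯(x,y)`: the supremum of `τ`-lengths of future-directed causal curves from `x` to `y`
(`0` if there are none). -/
noncomputable def maxLen (x y : X) : ℝ≥0∞ :=
  ⨆ (γ : ℝ → X) (_ : L.IsCausalOn γ (Icc 0 1)) (_ : γ 0 = x) (_ : γ 1 = y), L.tauLen γ 0 1

/-- A *Lorentzian length space*: a locally causally closed, causally path connected, localisable
Lorentzian pre-length space with `τ = 𝒯`. -/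
structure IsLLS : Prop where
  locallyCausallyClosed : L.LocallyCausallyClosed
  causallyPathConnected : L.CausallyPathConnected
  localisable : L.Localisable
  tau_eq_maxLen : ∀ x y : X, L.tau x y = L.maxLen x y

/-- A *regular Lorentzian length space*. -/
def IsRegularLLS : Prop := L.IsLLS ∧ L.RegularlyLocalisable

/-- Strong causality: every point has arbitrarily small neighbourhoods which no causal curve
leaves and re-enters. -/
def StronglyCausal : Prop :=
  ∀ x : X, ∀ V ∈ 𝓝 x, ∃ U ∈ 𝓝 x, U ⊆ V ∧
    ∀ (γ : ℝ → X) (c d : ℝ), c ≤ d → L.IsCausalOn γ (Icc c d) →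
      γ c ∈ U → γ d ∈ U → MapsTo γ (Icc c d) V

/-- A (synthetic) geodesic: a future-directed causal curve which is locally maximal within
localising neighbourhoods. -/
def IsGeodesicOn (γ : ℝ → X) (I : Set ℝ) : Prop :=
  L.IsCausalOn γ I ∧
  ∀ t₀ ∈ I, ∃ (Nb : L.LocalisingNbhd (γ t₀)) (c d : ℝ),
    c ≤ t₀ ∧ t₀ ≤ d ∧ c < d ∧ Icc c d ⊆ I ∧ Icc c d ∈ 𝓝[I] t₀ ∧
    MapsTo γ (Icc c d) Nb.Ω ∧ L.IsMaximalIn γ c d Nb.Ω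

/-- A timelike (synthetic) geodesic. -/
def IsTimelikeGeodesicOn (γ : ℝ → X) (I : Set ℝ) : Prop :=
  L.IsGeodesicOn γ I ∧ L.IsTimelikeOn γ I

/-- An inextendible timelike geodesic: not the restriction of a timelike geodesic defined on a
strictly larger interval. -/
def IsInextTimelikeGeodesic (γ : ℝ → X) (I : Set ℝ) : Prop :=
  L.IsTimelikeGeodesicOn γ I ∧
  ∀ (γ' : ℝ → X) (I' : Set ℝ), I'.OrdConnected → I ⊆ I' → I ≠ I' →
    (∀ t ∈ I, γ' t = γ t) → ¬ L.IsTimelikeGeodesicOn γ' I'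

/-- Property (TC): all inextendible timelike geodesics have infinite `τ`-length. -/
def PropertyTC : Prop :=
  ∀ (γ : ℝ → X) (I : Set ℝ), I.OrdConnected → L.IsInextTimelikeGeodesic γ I →
    L.tauLenOn γ I = ∞

/-- An *extension* of the Lorentzian pre-length space `L` on `X` by the Lorentzian pre-length
space `L'` on `Y`: a metric isometry `ι` of `X` onto a proper open subset of the connected space
`Y` preserving the causal relations, timelike/causal curves and their `τ`-lengths. -/
structure Extension {Y : Type v} [MetricSpace Y] (L : LorentzianPreLength X)
    (L' : LorentzianPreLength Y) : Type (max u v) where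
  ι : X → Y
  connected : ConnectedSpace Y
  isometry : Isometry ι
  range_open : IsOpen (Set.range ι)
  range_ne_univ : Set.range ι ≠ Set.univ
  pres_causal : ∀ {x y}, L.causal x y → L'.causal (ι x) (ι y)
  pres_chron : ∀ {x y}, L.chron x y → L'.chron (ι x) (ι y)
  causal_iff : ∀ (γ : ℝ → X) (I : Set ℝ), I.OrdConnected →
      (L.IsCausalOn γ I ↔ L'.IsCausalOn (ι ∘ γ) I)
  timelike_iff : ∀ (γ : ℝ → X) (I : Set ℝ), I.OrdConnected →
      (L.IsTimelikeOn γ I ↔ L'.IsTimelikeOn (ι ∘ γ) I)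
  len_eq : ∀ (γ : ℝ → X) (c d : ℝ), L.IsCausalOn γ (Icc c d) →
      L.tauLen γ c d = L'.tauLen (ι ∘ γ) c d

end LorentzianPreLength

/-!
Since `γ̃` is maximal in the localising neighbourhood `Ũ`, it realises the local time
separation `ω̃` between its endpoints, and the reverse triangle inequality for `ω̃` then forces
every segment `γ̃|[c,d]` to realise `ω̃(γ̃ c, γ̃ d)` as well. As `ι` preserves `τ`-lengths,
`L_τ(λ|[c,d]) = ω̃(γ̃ c, γ̃ d) ≤ ω̃(γ̃ 0, γ̃ 1) < ∞`. Near each point of `λ`, strong causality of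
`X` keeps every causal curve between points of `λ` inside `ι⁻¹(Ũ)`, where its length is at most
`ω̃` of its endpoints; so `λ` is locally maximal, i.e. a geodesic. Finally a causal, hence
continuous, extension of `λ` to `[0,t*]` would give `ι(λ t*) = γ̃ t*`, which is not in `ι(X)`.
-/

lemma exists_Icc_subset_mem_nhdsWithin_Ico {a b t₀ : ℝ} (ht₀ : t₀ ∈ Ico a b) {S : Set ℝ}
    (hS : S ∈ 𝓝[Ico a b] t₀) :
    ∃ c d, c ≤ t₀ ∧ t₀ < d ∧ Icc c d ⊆ Ico a b ∩ S ∧ Icc c d ∈ 𝓝[Ico a b] t₀ := by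
  obtain ⟨ε, hε, hball⟩ := Metric.mem_nhdsWithin_iff.1 hS
  set δ := min (ε / 2) ((b - t₀) / 2)
  have hδε : δ ≤ ε / 2 := min_le_left _ _
  have hδb : δ ≤ (b - t₀) / 2 := min_le_right _ _
  have hδ0 : 0 < δ := lt_min (by linarith) (by linarith [ht₀.2])
  have hIco : Icc (max a (t₀ - δ)) (t₀ + δ) ⊆ Ico a b := fun x hx =>
    ⟨(le_max_left _ _).trans hx.1, by linarith [hx.2]⟩
  refine ⟨max a (t₀ - δ), t₀ + δ, max_le ht₀.1 (by linarith), by linarith,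
    fun x hx => ⟨hIco hx, hball ⟨?_, hIco hx⟩⟩, ?_⟩
  · have hx₁ := (le_max_right _ _).trans hx.1
    rw [Metric.mem_ball, Real.dist_eq, abs_lt]
    constructor <;> linarith [hx.2]
  · refine Metric.mem_nhdsWithin_iff.2 ⟨δ, hδ0, fun x ⟨hx, hxI⟩ => ?_⟩
    rw [Metric.mem_ball, Real.dist_eq, abs_lt] at hx
    exact ⟨max_le hxI.1 (by linarith), by linarith⟩

lemma not_exists_continuousOn_extension {X : Type u} {Y : Type v} [TopologicalSpace X]
    [TopologicalSpace Y] [T2Space Y] {ι : X → Y} (hι : Continuous ι) {γ : ℝ → Y} {lam : ℝ → X}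
    {a T : ℝ} (haT : a < T) (hγ : ContinuousOn γ (Icc a T)) (hlam : EqOn (ι ∘ lam) γ (Ico a T))
    (hout : γ T ∉ range ι) :
    ¬ ∃ lam' : ℝ → X, ContinuousOn lam' (Icc a T) ∧ EqOn lam' lam (Ico a T) := by
  rintro ⟨lam', hcont, hagree⟩
  have hext : EqOn (ι ∘ lam') γ (Icc a T) :=
    EqOn.of_subset_closure (fun t ht => (congrArg ι (hagree ht)).trans (hlam ht))
      (hι.comp_continuousOn hcont) hγ Ico_subset_Icc_self (closure_Ico haT.ne).ge
  exact hout ⟨lam' T, hext (right_mem_Icc.2 haT.le)⟩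

namespace LorentzianPreLength

variable {X : Type u} [MetricSpace X] {L : LorentzianPreLength X}

lemma IsPartition.le_of_le {c d : ℝ} {N : ℕ} {t : ℕ → ℝ} (h : IsPartition c d N t) {i j : ℕ}
    (hij : i ≤ j) (hjN : j ≤ N) : t i ≤ t j := by
  induction j, hij using Nat.le_induction with
  | base => exact le_rfl
  | succ n _ ih => exact (ih (by omega)).trans (h.2.2 n (by omega)).le

lemma IsPartition.mem_Icc {c d : ℝ} {N : ℕ} {t : ℕ → ℝ} (h : IsPartition c d N t) {i : ℕ}
    (hi : i ≤ N) : t i ∈ Icc c d :=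
  ⟨h.1 ▸ h.le_of_le (Nat.zero_le i) hi, h.2.1 ▸ h.le_of_le hi le_rfl⟩

def partitionAppend (N₁ : ℕ) (t₁ t₂ : ℕ → ℝ) (i : ℕ) : ℝ :=
  if i < N₁ then t₁ i else t₂ (i - N₁)

@[simp]
lemma partitionAppend_add (N₁ : ℕ) (t₁ t₂ : ℕ → ℝ) (j : ℕ) :
    partitionAppend N₁ t₁ t₂ (N₁ + j) = t₂ j := by
  simp [partitionAppend]

lemma partitionAppend_of_le {a m b : ℝ} {N₁ N₂ : ℕ} {t₁ t₂ : ℕ → ℝ}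
    (h₁ : IsPartition a m N₁ t₁) (h₂ : IsPartition m b N₂ t₂) {i : ℕ} (hi : i ≤ N₁) :
    partitionAppend N₁ t₁ t₂ i = t₁ i := by
  rcases hi.lt_or_eq with hi | rfl
  · simp [partitionAppend, hi]
  · simpa [h₁.2.1] using partitionAppend_add i t₁ t₂ 0 |>.trans h₂.1

lemma IsPartition.append {a m b : ℝ} {N₁ N₂ : ℕ} {t₁ t₂ : ℕ → ℝ} (h₁ : IsPartition a m N₁ t₁)
    (h₂ : IsPartition m b N₂ t₂) : IsPartition a b (N₁ + N₂) (partitionAppend N₁ t₁ t₂) := by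
  refine ⟨(partitionAppend_of_le h₁ h₂ (Nat.zero_le _)).trans h₁.1, by simpa using h₂.2.1,
    fun i hi => ?_⟩
  rcases lt_or_ge i N₁ with hi₁ | hi₁
  · rw [partitionAppend_of_le h₁ h₂ hi₁.le, partitionAppend_of_le h₁ h₂ hi₁]
    exact h₁.2.2 i hi₁
  · obtain ⟨j, rfl⟩ := Nat.exists_eq_add_of_le hi₁
    rw [partitionAppend_add, add_assoc, partitionAppend_add]
    exact h₂.2.2 j (by omega)

lemma tauLen_le_sum (γ : ℝ → X) {c d : ℝ} {N : ℕ} {t : ℕ → ℝ} (ht : IsPartition c d N t) :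
    L.tauLen γ c d ≤ ∑ i ∈ Finset.range N, L.tau (γ (t i)) (γ (t (i + 1))) :=
  iInf_le_of_le N (iInf₂_le t ht)

lemma tauLen_self (γ : ℝ → X) (a : ℝ) : L.tauLen γ a a = 0 :=
  le_antisymm ((tauLen_le_sum γ (N := 0) (t := fun _ => a) ⟨rfl, rfl, by simp⟩).trans_eq
    (Finset.sum_range_zero _)) zero_le

lemma tauLen_congr {f g : ℝ → X} {c d : ℝ} (h : EqOn f g (Icc c d)) :
    L.tauLen f c d = L.tauLen g c d := by
  simp only [tauLen]
  refine iInf_congr fun N => iInf_congr fun t => iInf_congr fun ht => ?_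
  refine Finset.sum_congr rfl fun i hi => ?_
  rw [Finset.mem_range] at hi
  rw [h (ht.mem_Icc hi.le), h (ht.mem_Icc hi)]

lemma tauLen_le_add (γ : ℝ → X) {a m b : ℝ} :
    L.tauLen γ a b ≤ L.tauLen γ a m + L.tauLen γ m b := by
  simp only [tauLen, ENNReal.iInf_add, ENNReal.add_iInf]
  refine le_iInf fun N₂ => le_iInf fun t₂ => le_iInf fun h₂ =>
    le_iInf fun N₁ => le_iInf fun t₁ => le_iInf fun h₁ => ?_
  refine (tauLen_le_sum γ (h₁.append h₂)).trans_eq ?_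
  rw [Finset.sum_range_add]
  congr 1
  · refine Finset.sum_congr rfl fun i hi => ?_
    rw [Finset.mem_range] at hi
    rw [partitionAppend_of_le h₁ h₂ hi.le, partitionAppend_of_le h₁ h₂ hi]
  · refine Finset.sum_congr rfl fun j _ => ?_
    rw [partitionAppend_add, add_assoc, partitionAppend_add]

lemma IsCausalOn.le {γ : ℝ → X} {c d : ℝ} (h : L.IsCausalOn γ (Icc c d)) : c ≤ d :=
  let ⟨_, hs, _⟩ := h.2.2
  hs.1.trans hs.2

lemma IsCausalOn.continuousOn {γ : ℝ → X} {c d : ℝ} (h : L.IsCausalOn γ (Icc c d)) :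
    ContinuousOn γ (Icc c d) :=
  let ⟨_, hK⟩ := h.1 c d h.le subset_rfl
  hK.continuousOn

lemma IsCausalOn.mono {γ : ℝ → X} {I J : Set ℝ} (h : L.IsCausalOn γ I) (hJ : J ⊆ I)
    (hne : ∃ s ∈ J, ∃ t ∈ J, γ s ≠ γ t) : L.IsCausalOn γ J :=
  ⟨fun c d hcd hsub => h.1 c d hcd (hsub.trans hJ),
    fun _ _ hs ht hst => h.2.1 (hJ hs) (hJ ht) hst, hne⟩

lemma IsTimelikeOn.mono {γ : ℝ → X} {I J : Set ℝ} (h : L.IsTimelikeOn γ I) (hJ : J ⊆ I)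
    (hne : ∃ s ∈ J, ∃ t ∈ J, γ s ≠ γ t) : L.IsTimelikeOn γ J :=
  ⟨h.1.mono hJ hne, fun _ _ hs ht hst => h.2 (hJ hs) (hJ ht) hst⟩

lemma IsCausalOn.congr {f g : ℝ → X} {I : Set ℝ} (hf : L.IsCausalOn f I) (h : EqOn f g I) :
    L.IsCausalOn g I := by
  obtain ⟨hlip, hcausal, s, hs, t, ht, hne⟩ := hf
  refine ⟨fun c d hcd hsub => ?_, fun u v hu hv huv => ?_, s, hs, t, ht, h hs ▸ h ht ▸ hne⟩
  · obtain ⟨K, hK⟩ := hlip c d hcd hsub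
    exact ⟨K, fun x hx y hy => h (hsub hx) ▸ h (hsub hy) ▸ hK hx hy⟩
  · exact h hu ▸ h hv ▸ hcausal hu hv huv

lemma IsTimelikeOn.congr {f g : ℝ → X} {I : Set ℝ} (hf : L.IsTimelikeOn f I) (h : EqOn f g I) :
    L.IsTimelikeOn g I :=
  ⟨hf.1.congr h, fun _ _ hu hv huv => h hu ▸ h hv ▸ hf.2 hu hv huv⟩

lemma IsTimelikeOn.causal_of_le {γ : ℝ → X} {I : Set ℝ} (h : L.IsTimelikeOn γ I) {s t : ℝ}
    (hs : s ∈ I) (ht : t ∈ I) (hst : s ≤ t) : L.causal (γ s) (γ t) := by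
  rcases hst.lt_or_eq with hst | rfl
  · exact L.chron_le_causal (h.2 hs ht hst)
  · exact L.causal_refl _

namespace LocalisingNbhd

variable {x : X} (Nb : L.LocalisingNbhd x)

lemma omega_self {y : X} (hy : y ∈ Nb.Ω) : Nb.omega y y = 0 := by
  have h : Nb.omega y y + Nb.omega y y ≤ Nb.omega y y + 0 := by
    rw [add_zero]
    exact Nb.omega_rev_triangle hy hy hy (L.causal_refl y) (L.causal_refl y)
  exact nonpos_iff_eq_zero.1 (ENNReal.le_of_add_le_add_left (Nb.omega_lt_top y hy y hy).ne h)

lemma not_chron_self {y : X} (hy : y ∈ Nb.Ω) : ¬ L.chron y y := fun h =>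
  ((Nb.omega_pos_iff hy hy).2 h).ne' (Nb.omega_self hy)

lemma injOn_of_isTimelikeOn {γ : ℝ → X} {I : Set ℝ} (hγ : L.IsTimelikeOn γ I)
    (hmaps : MapsTo γ I Nb.Ω) : InjOn γ I := by
  intro s hs t ht hst
  by_contra hne
  rcases lt_or_gt_of_ne hne with h | h
  · have hchron := hγ.2 hs ht h
    rw [hst] at hchron
    exact Nb.not_chron_self (hmaps ht) hchron
  · have hchron := hγ.2 ht hs h
    rw [hst] at hchron
    exact Nb.not_chron_self (hmaps ht) hchron

lemma omega_add_add_le {p q r s : X} (hp : p ∈ Nb.Ω) (hq : q ∈ Nb.Ω) (hr : r ∈ Nb.Ω)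
    (hs : s ∈ Nb.Ω) (hpq : L.causal p q) (hqr : L.causal q r) (hrs : L.causal r s) :
    Nb.omega p q + Nb.omega q r + Nb.omega r s ≤ Nb.omega p s :=
  calc Nb.omega p q + Nb.omega q r + Nb.omega r s ≤ Nb.omega p r + Nb.omega r s :=
        add_le_add_left (Nb.omega_rev_triangle hp hq hr hpq hqr) _
    _ ≤ Nb.omega p s := Nb.omega_rev_triangle hp hr hs (L.causal_trans hpq hqr) hrs

lemma tauLen_le_omega {σ : ℝ → X} {a b : ℝ} (hσ : L.IsCausalOn σ (Icc a b))
    (hmaps : MapsTo σ (Icc a b) Nb.Ω) (hne : σ a ≠ σ b) :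
    L.tauLen σ a b ≤ Nb.omega (σ a) (σ b) := by
  have hab : a < b := hσ.le.lt_of_ne (ne_of_apply_ne σ hne)
  obtain ⟨μ, -, hμa, hμb, -, hμmax, hμlen, -⟩ :=
    Nb.max_curve _ (hmaps (left_mem_Icc.2 hab.le)) _ (hmaps (right_mem_Icc.2 hab.le))
      (hσ.2.1 (left_mem_Icc.2 hab.le) (right_mem_Icc.2 hab.le) hab) hne
  exact hμlen ▸ hμmax σ a b hσ hμa.symm hμb.symm hmaps

lemma tauLen_eq_omega_of_isMaximalIn {σ : ℝ → X} {a b : ℝ} (hσ : L.IsCausalOn σ (Icc a b))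
    (hmaps : MapsTo σ (Icc a b) Nb.Ω) (hmax : L.IsMaximalIn σ a b Nb.Ω) (hne : σ a ≠ σ b) :
    L.tauLen σ a b = Nb.omega (σ a) (σ b) := by
  refine le_antisymm (Nb.tauLen_le_omega hσ hmaps hne) ?_
  have hab : a ≤ b := hσ.le
  obtain ⟨μ, hμ, hμa, hμb, hμmaps, -, hμlen, -⟩ :=
    Nb.max_curve _ (hmaps (left_mem_Icc.2 hab)) _ (hmaps (right_mem_Icc.2 hab))
      (hσ.2.1 (left_mem_Icc.2 hab) (right_mem_Icc.2 hab) (hab.lt_of_ne (ne_of_apply_ne σ hne)))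
      hne
  exact hμlen ▸ hmax μ 0 1 hμ hμa hμb hμmaps

/-- `τ`-maximal timelike curves in `Ω` are of this kind, see `tauLen_eq_omega_of_isMaximalIn`. -/
structure RealisesOmega (γ : ℝ → X) : Prop where
  isTimelikeOn : L.IsTimelikeOn γ (Icc 0 1)
  mapsTo : MapsTo γ (Icc 0 1) Nb.Ω
  tauLen_eq_omega : L.tauLen γ 0 1 = Nb.omega (γ 0) (γ 1)

namespace RealisesOmega

variable {Nb} {γ : ℝ → X}

lemma injOn (hγ : Nb.RealisesOmega γ) : InjOn γ (Icc 0 1) :=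
  Nb.injOn_of_isTimelikeOn hγ.isTimelikeOn hγ.mapsTo

lemma omega_add_add_le (hγ : Nb.RealisesOmega γ) {c d : ℝ} (hc : 0 ≤ c) (hcd : c ≤ d)
    (hd : d ≤ 1) :
    Nb.omega (γ 0) (γ c) + Nb.omega (γ c) (γ d) + Nb.omega (γ d) (γ 1) ≤ Nb.omega (γ 0) (γ 1) := by
  have h0 : (0 : ℝ) ∈ Icc 0 1 := left_mem_Icc.2 zero_le_one
  have h1 : (1 : ℝ) ∈ Icc 0 1 := right_mem_Icc.2 zero_le_one
  have hc' : c ∈ Icc 0 1 := ⟨hc, hcd.trans hd⟩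
  have hd' : d ∈ Icc 0 1 := ⟨hc.trans hcd, hd⟩
  exact Nb.omega_add_add_le (hγ.mapsTo h0) (hγ.mapsTo hc') (hγ.mapsTo hd') (hγ.mapsTo h1)
    (hγ.isTimelikeOn.causal_of_le h0 hc' hc) (hγ.isTimelikeOn.causal_of_le hc' hd' hcd)
    (hγ.isTimelikeOn.causal_of_le hd' h1 hd)

lemma tauLen_le_omega_of_le (hγ : Nb.RealisesOmega γ) {c d : ℝ} (hc : 0 ≤ c) (hcd : c ≤ d)
    (hd : d ≤ 1) : L.tauLen γ c d ≤ Nb.omega (γ c) (γ d) := by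
  rcases hcd.lt_or_eq with hcd | rfl
  · have hsub : Icc c d ⊆ Icc 0 1 := Icc_subset_Icc hc hd
    have hne : γ c ≠ γ d := hγ.injOn.ne (hsub (left_mem_Icc.2 hcd.le))
      (hsub (right_mem_Icc.2 hcd.le)) hcd.ne
    exact Nb.tauLen_le_omega
      (hγ.isTimelikeOn.1.mono hsub ⟨c, left_mem_Icc.2 hcd.le, d, right_mem_Icc.2 hcd.le, hne⟩)
      (hγ.mapsTo.mono_left hsub) hne
  · exact (tauLen_self γ c).trans_le zero_le

/-- Otherwise, by the reverse triangle inequality for `ω` and subadditivity of `L_τ`, the whole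
of `γ` could not realise `ω`. -/
lemma tauLen_eq_omega_of_le (hγ : Nb.RealisesOmega γ) {c d : ℝ} (hc : 0 ≤ c) (hcd : c ≤ d)
    (hd : d ≤ 1) :
    L.tauLen γ c d = Nb.omega (γ c) (γ d) := by
  refine le_antisymm (hγ.tauLen_le_omega_of_le hc hcd hd) ?_
  have hfin : ∀ {s t : ℝ}, s ∈ Icc (0 : ℝ) 1 → t ∈ Icc (0 : ℝ) 1 → Nb.omega (γ s) (γ t) ≠ ∞ :=
    fun hs ht => (Nb.omega_lt_top _ (hγ.mapsTo hs) _ (hγ.mapsTo ht)).ne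
  have hchain :
      Nb.omega (γ 0) (γ c) + Nb.omega (γ c) (γ d) + Nb.omega (γ d) (γ 1) ≤
        Nb.omega (γ 0) (γ c) + L.tauLen γ c d + Nb.omega (γ d) (γ 1) :=
    calc _ ≤ Nb.omega (γ 0) (γ 1) := hγ.omega_add_add_le hc hcd hd
      _ = L.tauLen γ 0 1 := hγ.tauLen_eq_omega.symm
      _ ≤ L.tauLen γ 0 c + L.tauLen γ c d + L.tauLen γ d 1 :=
          (tauLen_le_add γ).trans (add_le_add_left (tauLen_le_add γ) _)
      _ ≤ _ := by
          gcongr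
          · exact hγ.tauLen_le_omega_of_le le_rfl hc (hcd.trans hd)
          · exact hγ.tauLen_le_omega_of_le (hc.trans hcd) hd le_rfl
  exact ENNReal.le_of_add_le_add_left (hfin (left_mem_Icc.2 zero_le_one) ⟨hc, hcd.trans hd⟩)
    (ENNReal.le_of_add_le_add_right (hfin ⟨hc.trans hcd, hd⟩ (right_mem_Icc.2 zero_le_one))
      hchain)

end RealisesOmega

end LocalisingNbhd

namespace Extension

variable {Y : Type v} [MetricSpace Y] {L' : LorentzianPreLength Y} (E : L.Extension L')
  {p : Y} {Nb : L'.LocalisingNbhd p} {γ' : ℝ → Y} {lam : ℝ → X}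

lemma isTimelikeOn_of_eqOn (hγ' : Nb.RealisesOmega γ') {I : Set ℝ} (hI : I.OrdConnected)
    (hsub : I ⊆ Icc 0 1) {s t : ℝ} (hs : s ∈ I) (ht : t ∈ I) (hst : s ≠ t)
    (hlam : EqOn (E.ι ∘ lam) γ' I) : L.IsTimelikeOn lam I :=
  (E.timelike_iff lam I hI).2 <| (hγ'.isTimelikeOn.mono hsub
    ⟨s, hs, t, ht, hγ'.injOn.ne (hsub hs) (hsub ht) hst⟩).congr hlam.symm

lemma isTimelikeOn_Ico_of_eqOn (hγ' : Nb.RealisesOmega γ') {T : ℝ} (hT0 : 0 < T) (hT1 : T ≤ 1)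
    (hlam : EqOn (E.ι ∘ lam) γ' (Ico 0 T)) : L.IsTimelikeOn lam (Ico 0 T) :=
  E.isTimelikeOn_of_eqOn hγ' ordConnected_Ico
    (Ico_subset_Icc_self.trans (Icc_subset_Icc le_rfl hT1)) (left_mem_Ico.2 hT0)
    ⟨(half_pos hT0).le, half_lt_self hT0⟩ (half_pos hT0).ne hlam

lemma tauLen_eq_omega (hγ' : Nb.RealisesOmega γ') {c d : ℝ} (hc : 0 ≤ c) (hcd : c ≤ d)
    (hd : d ≤ 1) (hlam : EqOn (E.ι ∘ lam) γ' (Icc c d)) :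
    L.tauLen lam c d = Nb.omega (γ' c) (γ' d) := by
  rcases hcd.lt_or_eq with hcd | rfl
  · have hlamcd := E.isTimelikeOn_of_eqOn hγ' ordConnected_Icc (Icc_subset_Icc hc hd)
      (left_mem_Icc.2 hcd.le) (right_mem_Icc.2 hcd.le) hcd.ne hlam
    rw [E.len_eq lam c d hlamcd.1, tauLen_congr hlam, hγ'.tauLen_eq_omega_of_le hc hcd.le hd]
  · rw [tauLen_self, Nb.omega_self (hγ'.mapsTo ⟨hc, hd⟩)]

/-- `W` is arbitrary since `hstay`, which strong causality provides near points of `lam`, already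
confines all competitors to `ι⁻¹(Ω)`. -/
lemma isMaximalIn_of_forall_mapsTo (hγ' : Nb.RealisesOmega γ') {c d : ℝ} (hc : 0 ≤ c)
    (hcd : c < d) (hd : d ≤ 1) (hlam : EqOn (E.ι ∘ lam) γ' (Icc c d))
    (hstay : ∀ (σ : ℝ → X) (c' d' : ℝ), L.IsCausalOn σ (Icc c' d') → σ c' = lam c →
      σ d' = lam d → MapsTo (E.ι ∘ σ) (Icc c' d') Nb.Ω) (W : Set X) :
    L.IsMaximalIn lam c d W := by
  intro σ c' d' hσ hσc hσd _
  have hσc' : (E.ι ∘ σ) c' = γ' c := by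
    rw [Function.comp_apply, hσc]
    exact hlam (left_mem_Icc.2 hcd.le)
  have hσd' : (E.ι ∘ σ) d' = γ' d := by
    rw [Function.comp_apply, hσd]
    exact hlam (right_mem_Icc.2 hcd.le)
  have hne : (E.ι ∘ σ) c' ≠ (E.ι ∘ σ) d' := by
    rw [hσc', hσd']
    exact hγ'.injOn.ne ⟨hc, hcd.le.trans hd⟩ ⟨hc.trans hcd.le, hd⟩ hcd.ne
  calc L.tauLen σ c' d' = L'.tauLen (E.ι ∘ σ) c' d' := E.len_eq σ c' d' hσ
    _ ≤ Nb.omega (γ' c) (γ' d) := hσc' ▸ hσd' ▸ Nb.tauLen_le_omega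
        ((E.causal_iff σ _ ordConnected_Icc).1 hσ) (hstay σ c' d' hσ hσc hσd) hne
    _ = L.tauLen lam c d := (E.tauLen_eq_omega hγ' hc hcd.le hd hlam).symm

lemma isGeodesicOn_of_eqOn (hSC : L.StronglyCausal) (hloc : L.Localisable)
    (hγ' : Nb.RealisesOmega γ') {T : ℝ} (hT0 : 0 < T) (hT1 : T ≤ 1)
    (hlam : EqOn (E.ι ∘ lam) γ' (Ico 0 T)) : L.IsGeodesicOn lam (Ico 0 T) := by
  have hsub : Ico 0 T ⊆ Icc 0 1 := Ico_subset_Icc_self.trans (Icc_subset_Icc le_rfl hT1)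
  refine ⟨(E.isTimelikeOn_Ico_of_eqOn hγ' hT0 hT1 hlam).1, fun t₀ ht₀ => ?_⟩
  obtain ⟨NbX⟩ := hloc (lam t₀)
  have hV : NbX.Ω ∩ E.ι ⁻¹' Nb.Ω ∈ 𝓝 (lam t₀) :=
    (NbX.isOpen.inter (Nb.isOpen.preimage E.isometry.continuous)).mem_nhds
      ⟨NbX.mem, show (E.ι ∘ lam) t₀ ∈ Nb.Ω by rw [hlam ht₀]; exact hγ'.mapsTo (hsub ht₀)⟩
  obtain ⟨U, hU, hUV, hUstay⟩ := hSC _ _ hV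
  have hcont : ContinuousWithinAt lam (Ico 0 T) t₀ :=
    E.isometry.isEmbedding.isInducing.continuousWithinAt_iff.2 <|
      ((hγ'.isTimelikeOn.1.continuousOn t₀ (hsub ht₀)).mono hsub).congr (fun _ ht => hlam ht)
        (hlam ht₀)
  obtain ⟨c, d, hct₀, ht₀d, hcd, hnhds⟩ :=
    exists_Icc_subset_mem_nhdsWithin_Ico ht₀ (hcont.preimage_mem_nhdsWithin hU)
  have hcdI : Icc c d ⊆ Ico 0 T := fun t ht => (hcd ht).1
  have hcdU : MapsTo lam (Icc c d) U := fun t ht => (hcd ht).2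
  have hcd' : c < d := hct₀.trans_lt ht₀d
  refine ⟨NbX, c, d, hct₀, ht₀d.le, hcd', hcdI, hnhds, fun t ht => (hUV (hcdU ht)).1,
    E.isMaximalIn_of_forall_mapsTo hγ' (hcdI (left_mem_Icc.2 hcd'.le)).1 hcd'
      (hsub (hcdI (right_mem_Icc.2 hcd'.le))).2 (hlam.mono hcdI)
      (fun σ c' d' hσ hσc hσd => ?_) _⟩
  have hσU := hUstay σ c' d' hσ.le hσ (hσc ▸ hcdU (left_mem_Icc.2 hcd'.le))
    (hσd ▸ hcdU (right_mem_Icc.2 hcd'.le))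
  exact fun t ht => (hσU ht).2

lemma tauLenOn_lt_top_of_eqOn (hγ' : Nb.RealisesOmega γ') {T : ℝ} (hT1 : T ≤ 1)
    (hlam : EqOn (E.ι ∘ lam) γ' (Ico 0 T)) : L.tauLenOn lam (Ico 0 T) < ∞ := by
  refine lt_of_le_of_lt (iSup_le fun c => iSup_le fun d => iSup_le fun hcd => iSup_le
    fun hsub => ?_) (Nb.omega_lt_top _ (hγ'.mapsTo (left_mem_Icc.2 zero_le_one)) _
      (hγ'.mapsTo (right_mem_Icc.2 zero_le_one)))
  have hc : 0 ≤ c := (hsub (left_mem_Icc.2 hcd)).1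
  have hd : d ≤ 1 := ((hsub (right_mem_Icc.2 hcd)).2.trans_le hT1).le
  rw [E.tauLen_eq_omega hγ' hc hcd hd (hlam.mono hsub)]
  exact le_add_right le_add_self |>.trans (hγ'.omega_add_add_le hc hcd hd)

end Extension

end LorentzianPreLength

theorem pullback_maximal_curve_is_finite_inext_geodesic_general
    {X : Type u} {Y : Type v} [MetricSpace X] [MetricSpace Y]
    (L : LorentzianPreLength X) (L' : LorentzianPreLength Y)
    (hSC : L.StronglyCausal) (hL : L.IsLLS)
    (E : L.Extension L')
    (p : Y) (Nb : L'.LocalisingNbhd p)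
    (γ' : ℝ → Y) (tstar : ℝ) (htstar : tstar ∈ Set.Ioo (0:ℝ) 1)
    (hγ'tl : L'.IsTimelikeOn γ' (Set.Icc 0 1))
    (hγ'max : L'.IsMaximalIn γ' 0 1 Nb.Ω)
    (hmaps : Set.MapsTo γ' (Set.Icc 0 1) Nb.Ω)
    (hout : γ' tstar ∉ Set.range E.ι)
    (lam : ℝ → X) (hlam : ∀ t ∈ Set.Ico (0:ℝ) tstar, E.ι (lam t) = γ' t) :
    L.IsTimelikeGeodesicOn lam (Set.Ico 0 tstar) ∧
    L.tauLenOn lam (Set.Ico 0 tstar) < ∞ ∧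
    ¬ ∃ lam' : ℝ → X, L.IsGeodesicOn lam' (Set.Icc 0 tstar) ∧
        ∀ t ∈ Set.Ico (0:ℝ) tstar, lam' t = lam t := by
  obtain ⟨hT0, hT1⟩ := htstar
  have h0 : (0 : ℝ) ∈ Icc 0 1 := left_mem_Icc.2 zero_le_one
  have h1 : (1 : ℝ) ∈ Icc 0 1 := right_mem_Icc.2 zero_le_one
  have hγ' : Nb.RealisesOmega γ' := ⟨hγ'tl, hmaps, Nb.tauLen_eq_omega_of_isMaximalIn hγ'tl.1 hmaps
    hγ'max ((Nb.injOn_of_isTimelikeOn hγ'tl hmaps).ne h0 h1 zero_ne_one)⟩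
  have hlam' : EqOn (E.ι ∘ lam) γ' (Ico 0 tstar) := fun t ht => hlam t ht
  refine ⟨⟨E.isGeodesicOn_of_eqOn hSC hL.localisable hγ' hT0 hT1.le hlam',
    E.isTimelikeOn_Ico_of_eqOn hγ' hT0 hT1.le hlam'⟩,
    E.tauLenOn_lt_top_of_eqOn hγ' hT1.le hlam', ?_⟩
  rintro ⟨lam', hgeo, hagree⟩
  exact not_exists_continuousOn_extension E.isometry.continuous hT0
    (hγ'tl.1.continuousOn.mono (Icc_subset_Icc le_rfl hT1.le)) hlam' hout
    ⟨lam', hgeo.1.continuousOn, fun t ht => hagree t ht⟩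

/-- Let the regular Lorentzian length space `X̃` extend the strongly causal
Lorentzian length space `X` via `ι`, let `γ̃ : [0,1] → X̃` be a future-directed timelike curve
which is maximal in a localising neighbourhood `Ũ` of `X̃`, with `γ̃([0,1]) ⊆ Ũ`,
`γ̃([0,t*)) ⊆ ι(X)` and `γ̃(t*) ∉ ι(X)`, and let `λ : [0,t*) → X` be the pullback `ι ∘ λ = γ̃`.
Then `λ` is a timelike geodesic of `X` of finite `τ`-length which is inextendible as a geodesic
in `X`. -/
theorem pullback_maximal_curve_is_finite_inext_geodesic
    {X : Type u} {Y : Type v} [MetricSpace X] [MetricSpace Y]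
    (L : LorentzianPreLength X) (L' : LorentzianPreLength Y)
    (hSC : L.StronglyCausal) (hL : L.IsLLS) (hL' : L'.IsRegularLLS)
    (E : L.Extension L')
    (p : Y) (Nb : L'.LocalisingNbhd p)
    (γ' : ℝ → Y) (tstar : ℝ) (htstar : tstar ∈ Set.Ioo (0:ℝ) 1)
    (hγ'tl : L'.IsTimelikeOn γ' (Set.Icc 0 1))
    (hγ'max : L'.IsMaximalIn γ' 0 1 Nb.Ω)
    (hγ'real : L'.tauLen γ' 0 1 = Nb.omega (γ' 0) (γ' 1))
    (hmaps : Set.MapsTo γ' (Set.Icc 0 1) Nb.Ω)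
    (hend : γ' 1 = p)
    (hin : ∀ t ∈ Set.Ico (0:ℝ) tstar, γ' t ∈ Set.range E.ι)
    (hout : γ' tstar ∉ Set.range E.ι)
    (lam : ℝ → X) (hlam : ∀ t ∈ Set.Ico (0:ℝ) tstar, E.ι (lam t) = γ' t) :
    L.IsTimelikeGeodesicOn lam (Set.Ico 0 tstar) ∧
    L.tauLenOn lam (Set.Ico 0 tstar) < ∞ ∧
    ¬ ∃ lam' : ℝ → X, L.IsGeodesicOn lam' (Set.Icc 0 tstar) ∧
        ∀ t ∈ Set.Ico (0:ℝ) tstar, lam' t = lam t :=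
  pullback_maximal_curve_is_finite_inext_geodesic_general L L' hSC hL E p Nb γ' tstar htstar hγ'tl
    hγ'max hmaps hout lam hlam
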